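/- arXiv:1109.0567 — 3 statements merged into one kernel-verified Lean document; each statement's English description precedes it below -/
import Mathlib

section
/- For n = 1 and V(x) = 1/(1+x²), the averaged function is V^ave(z) = (1/2π)∫₀^{2π} (1 + (|z|²/2)(1 + cos 2t))^{-1} dt, and V^ave(z) is NOT O(1/|z|²) as |z| → ∞; in fact |z|² · V^ave(z) → ∞ as |z| → ∞. -/
/-!
Rotating `z` only shifts the phase `t`, so by periodicity `V^ave(z)` is the circle average of
`V(‖z‖ cos t)`. For `V(x) = 1/(1+x²)` and `R = ‖z‖` large, the integrand is at least `1/2` on the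
window `|t - π/2| ≤ 1/R` (there `|cos t| ≤ |t - π/2|`), so `V^ave(z) ≥ 1/(2πR)` and
`R² V^ave(z) ≥ R/(2π)`.
-/

open scoped Real
open Filter

/-- The harmonic-oscillator average of `V : ℝ → ℝ` in the complex phase-space
coordinate `z = x + ip`. -/
noncomputable def ave1 (V : ℝ → ℝ) (z : ℂ) : ℝ :=
  (1 / (2 * Real.pi)) *
    ∫ t in (0:ℝ)..(2 * Real.pi), V ((Complex.exp (Complex.I * t) * z).re)

lemma Complex.re_exp_I_mul (z : ℂ) (t : ℝ) :
    (Complex.exp (Complex.I * t) * z).re = ‖z‖ * Real.cos (t + Complex.arg z) := by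
  rw [Real.cos_add, mul_comm Complex.I]
  simp only [Complex.mul_re, Complex.exp_ofReal_mul_I_re, Complex.exp_ofReal_mul_I_im]
  linear_combination (-Real.cos t) * Complex.norm_mul_cos_arg z
    + Real.sin t * Complex.norm_mul_sin_arg z

lemma ave1_eq_integral_norm_mul_cos (V : ℝ → ℝ) (z : ℂ) :
    ave1 V z = (1 / (2 * π)) * ∫ t in (0:ℝ)..(2 * π), V (‖z‖ * Real.cos t) := by
  have hper : Function.Periodic (fun t => V (‖z‖ * Real.cos t)) (2 * π) := fun t => by
    simp only [Real.cos_add_two_pi]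
  simp only [ave1, Complex.re_exp_I_mul]
  rw [intervalIntegral.integral_comp_add_right (fun t => V (‖z‖ * Real.cos t)),
    zero_add, add_comm (2 * π), hper.intervalIntegral_add_eq (Complex.arg z) 0, zero_add]

lemma Real.cos_sq_le_sq_sub_pi_div_two (t : ℝ) : Real.cos t ^ 2 ≤ (t - π / 2) ^ 2 := by
  simpa [Real.sin_sub_pi_div_two] using Real.sin_sq_le_sq (x := t - π / 2)

lemma one_div_le_integral_one_div_one_add_sq_mul_cos {R : ℝ} (hR : 2 / π ≤ R) :
    1 / R ≤ ∫ t in (0:ℝ)..(2 * π), 1 / (1 + (R * Real.cos t) ^ 2) := by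
  have hR0 : 0 < R := (div_pos two_pos Real.pi_pos).trans_le hR
  have hr : 1 / R ≤ π / 2 := by
    rw [div_le_iff₀ hR0]; rw [div_le_iff₀ Real.pi_pos] at hR; linarith
  have hr0 : 0 < 1 / R := one_div_pos.2 hR0
  have hcont : Continuous fun t => 1 / (1 + (R * Real.cos t) ^ 2) :=
    continuous_const.div (by fun_prop) fun t => by positivity
  have hwindow : ∀ t ∈ Set.Icc (π / 2 - 1 / R) (π / 2 + 1 / R),
      1 / 2 ≤ 1 / (1 + (R * Real.cos t) ^ 2) := by
    rintro t ⟨ht₁, ht₂⟩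
    have hdist : (t - π / 2) ^ 2 ≤ (1 / R) ^ 2 := sq_le_sq' (by linarith) (by linarith)
    have hcos : (R * Real.cos t) ^ 2 ≤ 1 := by
      calc (R * Real.cos t) ^ 2 ≤ R ^ 2 * (1 / R) ^ 2 := by
            rw [mul_pow]
            exact mul_le_mul_of_nonneg_left
              ((Real.cos_sq_le_sq_sub_pi_div_two t).trans hdist) (sq_nonneg R)
        _ = 1 := by field_simp
    exact one_div_le_one_div_of_le (by positivity) (by linarith)
  calc 1 / R = ∫ _ in (π / 2 - 1 / R)..(π / 2 + 1 / R), (1 / 2 : ℝ) := by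
        simp only [intervalIntegral.integral_const, smul_eq_mul]; ring
    _ ≤ ∫ t in (π / 2 - 1 / R)..(π / 2 + 1 / R), 1 / (1 + (R * Real.cos t) ^ 2) :=
        intervalIntegral.integral_mono_on (by linarith) intervalIntegrable_const
          (hcont.intervalIntegrable _ _) hwindow
    _ ≤ ∫ t in (0:ℝ)..(2 * π), 1 / (1 + (R * Real.cos t) ^ 2) :=
        intervalIntegral.integral_mono_interval (by linarith) (by linarith) (by linarith)
          (Eventually.of_forall fun t => by positivity) (hcont.intervalIntegrable _ _)

/-- For `V(x) = 1/(1+x²)` in one dimension, the average has the explicit integral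
formula `(1/2π)∫₀^{2π} (1 + (|z|²/2)(1+cos 2t))⁻¹ dt`, and it is *not* `O(1/|z|²)`:
in fact `|z|² V^ave(z) → ∞` as `|z| → ∞`. -/
theorem average_one_over_one_plus_sq :
    (∀ z : ℂ, ave1 (fun x => 1 / (1 + x ^ 2)) z =
      (1 / (2 * Real.pi)) *
        ∫ t in (0:ℝ)..(2 * Real.pi),
          (1 + (‖z‖ ^ 2 / 2) * (1 + Real.cos (2 * t)))⁻¹) ∧
    Tendsto (fun z : ℂ => ‖z‖ ^ 2 * ave1 (fun x => 1 / (1 + x ^ 2)) z)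
      (Filter.cocompact ℂ) Filter.atTop := by
  refine ⟨fun z => ?_, ?_⟩
  · rw [ave1_eq_integral_norm_mul_cos]
    congr 1
    refine intervalIntegral.integral_congr fun t _ => ?_
    simp only [Real.cos_two_mul]
    ring
  · have hnorm : Tendsto (fun z : ℂ => ‖z‖) (cocompact ℂ) atTop := tendsto_norm_cocompact_atTop
    refine tendsto_atTop_mono' _ ?_ (hnorm.atTop_div_const (by positivity : 0 < 2 * π))
    filter_upwards [hnorm.eventually_ge_atTop (2 / π)] with z hz
    have hz0 : 0 < ‖z‖ := (div_pos two_pos Real.pi_pos).trans_le hz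
    calc ‖z‖ / (2 * π) = ‖z‖ ^ 2 * (1 / (2 * π) * (1 / ‖z‖)) := by field_simp
      _ ≤ ‖z‖ ^ 2 * ave1 (fun x => 1 / (1 + x ^ 2)) z := by
        rw [ave1_eq_integral_norm_mul_cos]
        gcongr
        exact one_div_le_integral_one_div_one_add_sq_mul_cos hz
end

section
/- Let n = 1 and let V : ℝ → ℝ be continuous and even, with V^ave(z) = (1/2π)∫₀^{2π} V(|z| cos θ) dθ. Then the map V ↦ V^ave is injective: if V₁, V₂ are two even continuous functions with V₁^ave = V₂^ave on ℂ, then V₁ = V₂. -/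
open scoped Real

/-!
For real `r` and even `V`, `ave1 V r = (2 / π) * Q V r` with
`Q V r = ∫₀^{π/2} V (r cos θ) dθ` (`quarterCircleIntegral`).
The transform `Q` is inverted by Abel's formula
`s ∫₀^{π/2} cos φ · Q V (s cos φ) dφ = (π / 2) ∫₀^s V`: on a monomial `u ↦ uⁿ` both sides reduce
to the Wallis product `Wₙ Wₙ₊₁ = π / (2 (n + 1))`, and both sides are additive in `V` and bounded
by its sup norm on `[-|s|, |s|]`, so the formula extends to continuous `V` by Weierstrass
approximation. Differentiating `∫₀^s V` in `s` then recovers `V`.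
-/

open Real intervalIntegral Polynomial Set

noncomputable def wallisIntegral (n : ℕ) : ℝ := ∫ θ in (0:ℝ)..(π / 2), cos θ ^ n

lemma wallisIntegral_succ_succ (n : ℕ) :
    wallisIntegral (n + 2) = (n + 1) / (n + 2) * wallisIntegral n := by
  simp [wallisIntegral, integral_cos_pow]

lemma wallisIntegral_mul_wallisIntegral_succ (n : ℕ) :
    wallisIntegral n * wallisIntegral (n + 1) = π / (2 * (n + 1)) := by
  induction n with
  | zero => simp [wallisIntegral]
  | succ k ih =>
    rw [wallisIntegral_succ_succ, mul_left_comm, mul_comm (wallisIntegral (k + 1)), ih]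
    push_cast
    field_simp
    ring

lemma eq_zero_of_eq_zero_on_monomials {a b C : ℝ} {D : (ℝ → ℝ) → ℝ}
    (hadd : ∀ f g, Continuous f → Continuous g → D (f + g) = D f + D g)
    (hbound : ∀ g ε, Continuous g → (∀ y ∈ Icc a b, |g y| ≤ ε) → |D g| ≤ C * ε)
    (hmono : ∀ (n : ℕ) (c : ℝ), D (fun x ↦ c * x ^ n) = 0)
    {f : ℝ → ℝ} (hf : Continuous f) : D f = 0 := by
  have hpoly : ∀ p : ℝ[X], D (fun x ↦ p.eval x) = 0 := by
    intro p
    induction p using Polynomial.induction_on' with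
    | add p q hp hq =>
      simp only [eval_add]
      rw [← Pi.add_def, hadd _ _ p.continuous q.continuous, hp, hq, add_zero]
    | monomial n c => simpa only [eval_monomial] using hmono n c
  refine abs_eq_zero.mp (eq_of_forall_dist_le fun ε hε ↦ ?_)
  have hε' : 0 < ε / (|C| + 1) := by positivity
  obtain ⟨p, hp⟩ := exists_polynomial_near_of_continuousOn a b f hf.continuousOn _ hε'
  have hsplit : D f = D (fun x ↦ p.eval x) - D (fun x ↦ p.eval x - f x) := by
    rw [eq_sub_iff_add_eq, ← hadd f (fun x ↦ p.eval x - f x) hf (p.continuous.sub hf)]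
    congr 1
    ext x
    simp
  calc dist |D f| 0 = |D (fun x ↦ p.eval x - f x)| := by simp [hsplit, hpoly]
    _ ≤ C * (ε / (|C| + 1)) := hbound _ _ (p.continuous.sub hf) fun y hy ↦ (hp y hy).le
    _ ≤ ε := by
      rw [← mul_div_assoc, div_le_iff₀ (by positivity)]
      nlinarith [le_abs_self C]

lemma abs_mul_cos_le (x θ : ℝ) : |x * cos θ| ≤ |x| := by
  rw [abs_mul]
  exact mul_le_of_le_one_right (abs_nonneg x) (abs_cos_le_one θ)

noncomputable def quarterCircleIntegral (f : ℝ → ℝ) (x : ℝ) : ℝ :=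
  ∫ θ in (0:ℝ)..(π / 2), f (x * cos θ)

lemma continuous_quarterCircleIntegral {f : ℝ → ℝ} (hf : Continuous f) :
    Continuous (quarterCircleIntegral f) :=
  continuous_parametric_intervalIntegral_of_continuous' (by fun_prop) _ _

lemma quarterCircleIntegral_add {f g : ℝ → ℝ} (hf : Continuous f) (hg : Continuous g) (x : ℝ) :
    quarterCircleIntegral (f + g) x = quarterCircleIntegral f x + quarterCircleIntegral g x :=
  integral_add ((hf.comp (by fun_prop)).intervalIntegrable _ _)
    ((hg.comp (by fun_prop)).intervalIntegrable _ _)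

lemma quarterCircleIntegral_monomial (n : ℕ) (c x : ℝ) :
    quarterCircleIntegral (fun u ↦ c * u ^ n) x = c * x ^ n * wallisIntegral n := by
  simp_rw [quarterCircleIntegral, wallisIntegral, mul_pow, ← mul_assoc, integral_const_mul]

lemma abs_quarterCircleIntegral_le {g : ℝ → ℝ} {R ε x : ℝ} (hx : |x| ≤ R)
    (hg : ∀ y ∈ Icc (-R) R, |g y| ≤ ε) : |quarterCircleIntegral g x| ≤ ε * (π / 2) := by
  have h := norm_integral_le_of_norm_le_const (a := 0) (b := π / 2) (f := fun θ ↦ g (x * cos θ))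
    fun θ _ ↦ hg _ (abs_le.mp ((abs_mul_cos_le x θ).trans hx))
  rwa [sub_zero, abs_of_pos (by positivity)] at h

lemma abs_integral_cos_mul_quarterCircleIntegral_le {g : ℝ → ℝ} {s ε : ℝ}
    (hg : ∀ y ∈ Icc (-|s|) |s|, |g y| ≤ ε) :
    |∫ φ in (0:ℝ)..(π / 2), cos φ * quarterCircleIntegral g (s * cos φ)| ≤
      ε * (π / 2) * (π / 2) := by
  have h := norm_integral_le_of_norm_le_const (a := 0) (b := π / 2) (C := ε * (π / 2))
    (f := fun φ ↦ cos φ * quarterCircleIntegral g (s * cos φ)) fun φ _ ↦ by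
      rw [norm_mul, ← one_mul (ε * (π / 2))]
      exact mul_le_mul (abs_cos_le_one φ) (abs_quarterCircleIntegral_le (abs_mul_cos_le s φ) hg)
        (abs_nonneg _) zero_le_one
  rwa [sub_zero, abs_of_pos (by positivity)] at h

lemma abs_integral_le_mul_abs_of_abs_le {g : ℝ → ℝ} {s ε : ℝ}
    (hg : ∀ y ∈ Icc (-|s|) |s|, |g y| ≤ ε) : |∫ u in (0:ℝ)..s, g u| ≤ ε * |s| := by
  have h := norm_integral_le_of_norm_le_const (a := 0) (b := s) (f := g) fun u hu ↦ hg u <| by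
    rcases Set.mem_uIoc.mp hu with h | h <;> constructor <;> cases abs_cases s <;> linarith
  rwa [sub_zero] at h

theorem integral_cos_mul_quarterCircleIntegral {f : ℝ → ℝ} (hf : Continuous f) (s : ℝ) :
    s * ∫ φ in (0:ℝ)..(π / 2), cos φ * quarterCircleIntegral f (s * cos φ) =
      π / 2 * ∫ u in (0:ℝ)..s, f u := by
  refine sub_eq_zero.mp <| eq_zero_of_eq_zero_on_monomials (a := -|s|) (b := |s|)
    (C := |s| * (π / 2) * (π / 2) + π / 2 * |s|)
    (D := fun f ↦ s * (∫ φ in (0:ℝ)..(π / 2), cos φ * quarterCircleIntegral f (s * cos φ)) -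
      π / 2 * ∫ u in (0:ℝ)..s, f u) ?_ ?_ ?_ hf
  · intro f g hf hg
    have hQ {h : ℝ → ℝ} (hh : Continuous h) :
        Continuous fun φ ↦ cos φ * quarterCircleIntegral h (s * cos φ) :=
      continuous_cos.mul ((continuous_quarterCircleIntegral hh).comp (by fun_prop))
    simp only [quarterCircleIntegral_add hf hg, mul_add, Pi.add_apply]
    rw [integral_add ((hQ hf).intervalIntegrable _ _) ((hQ hg).intervalIntegrable _ _),
      integral_add (hf.intervalIntegrable _ _) (hg.intervalIntegrable _ _)]
    ring
  · intro g ε _ hg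
    have h1 := abs_integral_cos_mul_quarterCircleIntegral_le hg
    have h2 := abs_integral_le_mul_abs_of_abs_le hg
    calc _ ≤ |s| * |∫ φ in (0:ℝ)..(π / 2), cos φ * quarterCircleIntegral g (s * cos φ)| +
          π / 2 * |∫ u in (0:ℝ)..s, g u| := by
          refine (abs_sub _ _).trans ?_
          rw [abs_mul, abs_mul, abs_of_pos (by positivity : 0 < π / 2)]
      _ ≤ _ := by
          have := pi_pos
          nlinarith [abs_nonneg s]
  · intro n c
    have hintegrand (φ : ℝ) : cos φ * quarterCircleIntegral (fun u ↦ c * u ^ n) (s * cos φ) =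
        c * s ^ n * wallisIntegral n * cos φ ^ (n + 1) := by
      rw [quarterCircleIntegral_monomial]
      ring
    simp_rw [hintegrand]
    rw [integral_const_mul, integral_const_mul, integral_pow, ← wallisIntegral,
      mul_assoc _ (wallisIntegral n), wallisIntegral_mul_wallisIntegral_succ]
    field_simp
    ring

lemma quarterCircleIntegral_injective {f g : ℝ → ℝ} (hf : Continuous f) (hg : Continuous g)
    (h : quarterCircleIntegral f = quarterCircleIntegral g) : f = g := by
  have hprim (s : ℝ) : ∫ u in (0:ℝ)..s, f u = ∫ u in (0:ℝ)..s, g u := by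
    have hfs := integral_cos_mul_quarterCircleIntegral hf s
    rw [h, integral_cos_mul_quarterCircleIntegral hg] at hfs
    exact (mul_right_inj' (by positivity)).mp hfs.symm
  funext x
  rw [← Continuous.deriv_integral f hf 0 x, ← Continuous.deriv_integral g hg 0 x, funext hprim]

lemma integral_comp_cos_zero_two_pi {F : ℝ → ℝ} (hF : Continuous F) (he : ∀ x, F (-x) = F x) :
    ∫ t in (0:ℝ)..(2 * π), F (cos t) = 4 * ∫ t in (0:ℝ)..(π / 2), F (cos t) := by
  have hint (a b : ℝ) : IntervalIntegrable (fun t ↦ F (cos t)) MeasureTheory.volume a b :=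
    (hF.comp continuous_cos).intervalIntegrable a b
  have hsecond : ∫ t in π..(2 * π), F (cos t) = ∫ t in (0:ℝ)..π, F (cos t) := by
    have h := integral_comp_sub_left (fun t ↦ F (cos t)) (2 * π) (a := 0) (b := π)
    simp only [cos_two_pi_sub, show 2 * π - π = π by ring, sub_zero] at h
    exact h.symm
  have hfourth : ∫ t in (π / 2)..π, F (cos t) = ∫ t in (0:ℝ)..(π / 2), F (cos t) := by
    simpa [he, sub_half] using
      (integral_comp_sub_left (fun t ↦ F (cos t)) π (a := 0) (b := π / 2)).symm
  rw [← integral_add_adjacent_intervals (hint 0 π) (hint π (2 * π)), hsecond,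
    ← integral_add_adjacent_intervals (hint 0 (π / 2)) (hint (π / 2) π), hfourth]
  ring

lemma ave1_ofReal_of_even {V : ℝ → ℝ} (hV : Continuous V) (he : ∀ x, V (-x) = V x) (r : ℝ) :
    ave1 V r = 2 / π * quarterCircleIntegral V r := by
  have hre (t : ℝ) : (Complex.exp (Complex.I * t) * r).re = r * cos t := by
    rw [mul_comm Complex.I, Complex.exp_mul_I]
    simp [← Complex.ofReal_cos, ← Complex.ofReal_sin, mul_comm]
  simp only [ave1, hre, quarterCircleIntegral]
  rw [integral_comp_cos_zero_two_pi (F := fun y ↦ V (r * y)) (by fun_prop)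
    (fun y ↦ by simpa using he (r * y))]
  field_simp
  ring

/-- In one dimension, the averaging map `V ↦ V^ave` is injective on even continuous
functions. -/
theorem average_injective_on_even (V₁ V₂ : ℝ → ℝ)
    (h₁ : Continuous V₁) (h₂ : Continuous V₂)
    (he₁ : ∀ x, V₁ (-x) = V₁ x) (he₂ : ∀ x, V₂ (-x) = V₂ x)
    (h : ∀ z : ℂ, ave1 V₁ z = ave1 V₂ z) :
    V₁ = V₂ := by
  refine quarterCircleIntegral_injective h₁ h₂ (funext fun r ↦ ?_)
  have hr := h r
  rw [ave1_ofReal_of_even h₁ he₁, ave1_ofReal_of_even h₂ he₂] at hr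
  exact (mul_right_inj' (by positivity)).mp hr
end

section
/- Let ψ : [0,1] → ℝ be continuous and strictly monotone. Then the collection of moments ∫₀¹ ψ(u)^k du for all nonnegative integers k determines ψ up to the reflection u ↦ 1-u; i.e., if ψ₁, ψ₂ are strictly monotone continuous functions on [0,1] with ∫₀¹ ψ₁^k = ∫₀¹ ψ₂^k for all k ≥ 0, then ψ₂(u) = ψ₁(u) for all u, or ψ₂(u) = ψ₁(1-u) for all u. -/
open scoped Real

open Set intervalIntegral

private lemma moments_aux_refl_mem {u : ℝ} (hu : u ∈ Set.Icc (0:ℝ) 1) :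
    1 - u ∈ Set.Icc (0:ℝ) 1 := ⟨by linarith [hu.2], by linarith [hu.1]⟩

private lemma moments_aux_refl_integral (g : ℝ → ℝ) :
    ∫ u in (0:ℝ)..1, g (1 - u) = ∫ u in (0:ℝ)..1, g u := by
  simpa using intervalIntegral.integral_comp_sub_left g 1

private lemma moments_aux_refl_mono {ψ : ℝ → ℝ} (h : StrictAntiOn ψ (Set.Icc 0 1)) :
    StrictMonoOn (fun u => ψ (1 - u)) (Set.Icc 0 1) := by
  intro a ha b hb hab
  exact h (moments_aux_refl_mem hb) (moments_aux_refl_mem ha) (by linarith)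

private lemma moments_aux_refl_cont {ψ : ℝ → ℝ} (h : ContinuousOn ψ (Set.Icc 0 1)) :
    ContinuousOn (fun u => ψ (1 - u)) (Set.Icc 0 1) :=
  h.comp (continuous_const.sub continuous_id).continuousOn
    fun u hu => moments_aux_refl_mem hu

/-- Core lemma: two strictly increasing continuous functions on `[0,1]` with equal
integrals against every continuous function cannot satisfy `ψ₁ u₀ < ψ₂ u₀` for `u₀ ∈ [0,1)`. -/
private lemma moments_aux_keyB (ψ₁ ψ₂ : ℝ → ℝ)
    (hc₁ : ContinuousOn ψ₁ (Set.Icc 0 1)) (hc₂ : ContinuousOn ψ₂ (Set.Icc 0 1))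
    (hm₁ : StrictMonoOn ψ₁ (Set.Icc 0 1)) (hm₂ : StrictMonoOn ψ₂ (Set.Icc 0 1))
    (hf : ∀ f : ℝ → ℝ, Continuous f →
      ∫ u in (0:ℝ)..1, f (ψ₁ u) = ∫ u in (0:ℝ)..1, f (ψ₂ u))
    (u₀ : ℝ) (hu₀ : u₀ ∈ Set.Ico (0:ℝ) 1) : ¬ ψ₁ u₀ < ψ₂ u₀ := by
  intro h
  have hu₀Icc : u₀ ∈ Set.Icc (0:ℝ) 1 := ⟨hu₀.1, hu₀.2.le⟩
  set ε : ℝ := (ψ₂ u₀ - ψ₁ u₀) / 3 with hεdef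
  have hε : 0 < ε := by simp only [hεdef]; linarith
  set t : ℝ := ψ₁ u₀ + ε with htdef
  have ht1 : ψ₁ u₀ < t := by simp only [htdef]; linarith
  have ht2 : t + ε < ψ₂ u₀ := by simp only [htdef, hεdef]; linarith
  -- find v ∈ (u₀, 1] with ψ₁ v < t
  have hev : ∀ᶠ u in nhdsWithin u₀ (Set.Icc 0 1), ψ₁ u < t :=
    ((hc₁ u₀ hu₀Icc).eventually_lt_const ht1)
  obtain ⟨δ, hδ, hball⟩ := Metric.mem_nhdsWithin_iff.mp hev
  set v : ℝ := min (u₀ + δ / 2) ((u₀ + 1) / 2) with hvdef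
  have hv0 : u₀ < v := by
    simp only [hvdef, lt_min_iff]; constructor <;> [linarith; linarith [hu₀.2]]
  have hv1 : v ≤ 1 := by
    have : (u₀ + 1) / 2 ≤ 1 := by linarith [hu₀.2]
    exact le_trans (min_le_right _ _) this
  have hvIcc : v ∈ Set.Icc (0:ℝ) 1 := ⟨by linarith [hu₀.1], hv1⟩
  have hψ₁v : ψ₁ v < t := by
    apply hball
    constructor
    · rw [Metric.mem_ball, Real.dist_eq, abs_of_nonneg (by linarith)]
      have : v ≤ u₀ + δ / 2 := min_le_left _ _
      linarith
    · exact hvIcc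
  -- the ramp function
  set f : ℝ → ℝ := fun x => min 1 (max 0 ((t + ε - x) / ε)) with hfdef
  have hfc : Continuous f := by
    apply continuous_const.min
    exact continuous_const.max ((continuous_const.sub continuous_id).div_const ε)
  have hf1 : ∀ x, x ≤ t → f x = 1 := by
    intro x hx
    have h1 : (1:ℝ) ≤ (t + ε - x) / ε := by
      rw [le_div_iff₀ hε]; linarith
    simp only [hfdef]
    rw [min_eq_left (le_max_of_le_right h1)]
  have hf0 : ∀ x, t + ε ≤ x → f x = 0 := by
    intro x hx
    have h1 : (t + ε - x) / ε ≤ 0 :=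
      div_nonpos_of_nonpos_of_nonneg (by linarith) hε.le
    simp only [hfdef]
    rw [max_eq_left h1, min_eq_right zero_le_one]
  have hfnn : ∀ x, 0 ≤ f x := fun x => le_min zero_le_one (le_max_left _ _)
  have hfle1 : ∀ x, f x ≤ 1 := fun x => min_le_left _ _
  -- integrability on subintervals
  have hint : ∀ (ψ : ℝ → ℝ), ContinuousOn ψ (Set.Icc 0 1) → ∀ a b : ℝ,
      a ∈ Set.Icc (0:ℝ) 1 → b ∈ Set.Icc (0:ℝ) 1 →
      IntervalIntegrable (fun u => f (ψ u)) MeasureTheory.volume a b := by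
    intro ψ hc a b ha hb
    exact ((hfc.comp_continuousOn hc).mono (Set.uIcc_subset_Icc ha hb)).intervalIntegrable
  have key : ∫ u in (0:ℝ)..1, f (ψ₁ u) = ∫ u in (0:ℝ)..1, f (ψ₂ u) := hf f hfc
  -- lower bound for the ψ₁ integral
  have split1 : ∫ u in (0:ℝ)..1, f (ψ₁ u)
      = (∫ u in (0:ℝ)..v, f (ψ₁ u)) + ∫ u in v..1, f (ψ₁ u) :=
    (integral_add_adjacent_intervals (hint ψ₁ hc₁ 0 v (Set.left_mem_Icc.2 zero_le_one) hvIcc)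
      (hint ψ₁ hc₁ v 1 hvIcc (Set.right_mem_Icc.2 zero_le_one))).symm
  have e1 : ∫ u in (0:ℝ)..v, f (ψ₁ u) = v := by
    rw [intervalIntegral.integral_congr (g := fun _ => (1:ℝ))]
    · simp
    · intro u hu
      rw [Set.uIcc_of_le (by linarith [hu₀.1] : (0:ℝ) ≤ v)] at hu
      have huIcc : u ∈ Set.Icc (0:ℝ) 1 := ⟨hu.1, hu.2.trans hv1⟩
      have : ψ₁ u ≤ ψ₁ v := hm₁.monotoneOn huIcc hvIcc hu.2
      exact hf1 _ (this.trans hψ₁v.le)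
  have e1' : (0:ℝ) ≤ ∫ u in v..1, f (ψ₁ u) :=
    intervalIntegral.integral_nonneg hv1 (fun u _ => hfnn _)
  -- upper bound for the ψ₂ integral
  have split2 : ∫ u in (0:ℝ)..1, f (ψ₂ u)
      = (∫ u in (0:ℝ)..u₀, f (ψ₂ u)) + ∫ u in u₀..1, f (ψ₂ u) :=
    (integral_add_adjacent_intervals (hint ψ₂ hc₂ 0 u₀ (Set.left_mem_Icc.2 zero_le_one) hu₀Icc)
      (hint ψ₂ hc₂ u₀ 1 hu₀Icc (Set.right_mem_Icc.2 zero_le_one))).symm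
  have e2 : ∫ u in u₀..1, f (ψ₂ u) = 0 := by
    rw [intervalIntegral.integral_congr (g := fun _ => (0:ℝ))]
    · simp
    · intro u hu
      rw [Set.uIcc_of_le hu₀.2.le] at hu
      have huIcc : u ∈ Set.Icc (0:ℝ) 1 := ⟨hu₀.1.trans hu.1, hu.2⟩
      have : ψ₂ u₀ ≤ ψ₂ u := hm₂.monotoneOn hu₀Icc huIcc hu.1
      exact hf0 _ (by linarith)
  have e3 : ∫ u in (0:ℝ)..u₀, f (ψ₂ u) ≤ u₀ := by
    have := intervalIntegral.integral_mono_on hu₀.1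
      (hint ψ₂ hc₂ 0 u₀ (Set.left_mem_Icc.2 zero_le_one) hu₀Icc)
      (_root_.intervalIntegrable_const (c := (1:ℝ)))
      (fun u _ => hfle1 (ψ₂ u))
    simpa using this
  rw [split1, split2] at key
  linarith

/-- Two strictly increasing continuous functions on `[0,1]` with equal integrals
against every continuous function agree on `[0,1]`. -/
private lemma moments_aux_keyA (ψ₁ ψ₂ : ℝ → ℝ)
    (hc₁ : ContinuousOn ψ₁ (Set.Icc 0 1)) (hc₂ : ContinuousOn ψ₂ (Set.Icc 0 1))
    (hm₁ : StrictMonoOn ψ₁ (Set.Icc 0 1)) (hm₂ : StrictMonoOn ψ₂ (Set.Icc 0 1))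
    (hf : ∀ f : ℝ → ℝ, Continuous f →
      ∫ u in (0:ℝ)..1, f (ψ₁ u) = ∫ u in (0:ℝ)..1, f (ψ₂ u)) :
    ∀ u ∈ Set.Icc (0:ℝ) 1, ψ₁ u = ψ₂ u := by
  have hf' : ∀ f : ℝ → ℝ, Continuous f →
      ∫ u in (0:ℝ)..1, f (ψ₂ u) = ∫ u in (0:ℝ)..1, f (ψ₁ u) :=
    fun f hfc => (hf f hfc).symm
  intro u hu
  rcases lt_or_eq_of_le hu.2 with hlt | heq
  · exact le_antisymm
      (not_lt.mp (moments_aux_keyB ψ₂ ψ₁ hc₂ hc₁ hm₂ hm₁ hf' u ⟨hu.1, hlt⟩))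
      (not_lt.mp (moments_aux_keyB ψ₁ ψ₂ hc₁ hc₂ hm₁ hm₂ hf u ⟨hu.1, hlt⟩))
  · -- u = 1 : reflect and negate
    subst heq
    set χ₁ : ℝ → ℝ := fun w => -ψ₁ (1 - w) with hχ₁
    set χ₂ : ℝ → ℝ := fun w => -ψ₂ (1 - w) with hχ₂
    have hcχ : ∀ (ψ : ℝ → ℝ), ContinuousOn ψ (Set.Icc 0 1) →
        ContinuousOn (fun w => -ψ (1 - w)) (Set.Icc 0 1) :=
      fun ψ hc => (moments_aux_refl_cont hc).neg
    have hmχ : ∀ (ψ : ℝ → ℝ), StrictMonoOn ψ (Set.Icc 0 1) →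
        StrictMonoOn (fun w => -ψ (1 - w)) (Set.Icc 0 1) := by
      intro ψ hm a ha b hb hab
      have := hm (moments_aux_refl_mem hb) (moments_aux_refl_mem ha) (by linarith)
      simpa using this
    have hfχ : ∀ f : ℝ → ℝ, Continuous f →
        ∫ u in (0:ℝ)..1, f (χ₁ u) = ∫ u in (0:ℝ)..1, f (χ₂ u) := by
      intro f hfc
      have h1 : ∫ u in (0:ℝ)..1, f (χ₁ u) = ∫ u in (0:ℝ)..1, f (-ψ₁ u) :=
        moments_aux_refl_integral (fun u => f (-ψ₁ u))
      have h2 : ∫ u in (0:ℝ)..1, f (χ₂ u) = ∫ u in (0:ℝ)..1, f (-ψ₂ u) :=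
        moments_aux_refl_integral (fun u => f (-ψ₂ u))
      rw [h1, h2]
      exact hf (fun x => f (-x)) (hfc.comp continuous_neg)
    have hfχ' : ∀ f : ℝ → ℝ, Continuous f →
        ∫ u in (0:ℝ)..1, f (χ₂ u) = ∫ u in (0:ℝ)..1, f (χ₁ u) :=
      fun f hfc => (hfχ f hfc).symm
    have h0 : χ₁ 0 = χ₂ 0 := by
      have hz : (0:ℝ) ∈ Set.Ico (0:ℝ) 1 := ⟨le_refl _, zero_lt_one⟩
      exact le_antisymm
        (not_lt.mp (moments_aux_keyB χ₂ χ₁ (hcχ ψ₂ hc₂) (hcχ ψ₁ hc₁)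
          (hmχ ψ₂ hm₂) (hmχ ψ₁ hm₁) hfχ' 0 hz))
        (not_lt.mp (moments_aux_keyB χ₁ χ₂ (hcχ ψ₁ hc₁) (hcχ ψ₂ hc₂)
          (hmχ ψ₁ hm₁) (hmχ ψ₂ hm₂) hfχ 0 hz))
    have : -ψ₁ 1 = -ψ₂ 1 := by simpa [hχ₁, hχ₂] using h0
    linarith

/-- Equal moments imply equal integrals against every continuous function. -/
private lemma moments_aux_keyC (ψ₁ ψ₂ : ℝ → ℝ)
    (hc₁ : ContinuousOn ψ₁ (Set.Icc 0 1)) (hc₂ : ContinuousOn ψ₂ (Set.Icc 0 1))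
    (hmom : ∀ k : ℕ, ∫ u in (0:ℝ)..1, (ψ₁ u) ^ k = ∫ u in (0:ℝ)..1, (ψ₂ u) ^ k) :
    ∀ f : ℝ → ℝ, Continuous f →
      ∫ u in (0:ℝ)..1, f (ψ₁ u) = ∫ u in (0:ℝ)..1, f (ψ₂ u) := by
  -- integrability helpers
  have hI : ∀ (ψ : ℝ → ℝ), ContinuousOn ψ (Set.Icc 0 1) → ∀ (g : ℝ → ℝ), Continuous g →
      IntervalIntegrable (fun u => g (ψ u)) MeasureTheory.volume 0 1 := by
    intro ψ hc g hg
    apply ContinuousOn.intervalIntegrable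
    rw [Set.uIcc_of_le zero_le_one]
    exact hg.comp_continuousOn hc
  -- polynomial equality
  have hpol : ∀ p : Polynomial ℝ,
      ∫ u in (0:ℝ)..1, p.eval (ψ₁ u) = ∫ u in (0:ℝ)..1, p.eval (ψ₂ u) := by
    intro p
    have hrw : ∀ (ψ : ℝ → ℝ), ContinuousOn ψ (Set.Icc 0 1) →
        ∫ u in (0:ℝ)..1, p.eval (ψ u)
          = ∑ i ∈ Finset.range (p.natDegree + 1),
              p.coeff i * ∫ u in (0:ℝ)..1, (ψ u) ^ i := by
      intro ψ hc
      have : (fun u => p.eval (ψ u))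
          = fun u => ∑ i ∈ Finset.range (p.natDegree + 1), p.coeff i * (ψ u) ^ i := by
        funext u; exact p.eval_eq_sum_range (ψ u)
      rw [this, intervalIntegral.integral_finset_sum]
      · refine Finset.sum_congr rfl fun i _ => ?_
        exact intervalIntegral.integral_const_mul _ _
      · intro i _
        exact (hI ψ hc (fun x => p.coeff i * x ^ i)
          (continuous_const.mul (continuous_pow i)))
    rw [hrw ψ₁ hc₁, hrw ψ₂ hc₂]
    exact Finset.sum_congr rfl fun i _ => by rw [hmom i]
  -- bounds on the ranges
  obtain ⟨M₁, hM₁⟩ := (isCompact_Icc (a := (0:ℝ)) (b := 1)).exists_bound_of_continuousOn hc₁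
  obtain ⟨M₂, hM₂⟩ := (isCompact_Icc (a := (0:ℝ)) (b := 1)).exists_bound_of_continuousOn hc₂
  set M : ℝ := max M₁ M₂ with hMdef
  have hrange : ∀ (ψ : ℝ → ℝ), (∀ x ∈ Set.Icc (0:ℝ) 1, ‖ψ x‖ ≤ M) →
      ∀ u ∈ Set.Icc (0:ℝ) 1, ψ u ∈ Set.Icc (-M) M := by
    intro ψ hb u hu
    have := hb u hu
    rw [Real.norm_eq_abs, abs_le] at this
    exact this
  have hb₁ : ∀ x ∈ Set.Icc (0:ℝ) 1, ‖ψ₁ x‖ ≤ M :=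
    fun x hx => (hM₁ x hx).trans (le_max_left _ _)
  have hb₂ : ∀ x ∈ Set.Icc (0:ℝ) 1, ‖ψ₂ x‖ ≤ M :=
    fun x hx => (hM₂ x hx).trans (le_max_right _ _)
  intro f hfc
  -- epsilon argument
  have habs : ∀ ε : ℝ, 0 < ε →
      |(∫ u in (0:ℝ)..1, f (ψ₁ u)) - ∫ u in (0:ℝ)..1, f (ψ₂ u)| ≤ ε := by
    intro ε hε
    obtain ⟨p, hp⟩ := exists_polynomial_near_of_continuousOn (-M) M f
      (hfc.continuousOn) (ε / 2) (by linarith)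
    have hbound : ∀ (ψ : ℝ → ℝ), ContinuousOn ψ (Set.Icc 0 1) →
        (∀ x ∈ Set.Icc (0:ℝ) 1, ‖ψ x‖ ≤ M) →
        |(∫ u in (0:ℝ)..1, f (ψ u)) - ∫ u in (0:ℝ)..1, p.eval (ψ u)| ≤ ε / 2 := by
      intro ψ hc hb
      rw [← intervalIntegral.integral_sub (hI ψ hc f hfc)
        (hI ψ hc (fun x => p.eval x) (p.continuous_aeval))]
      have := intervalIntegral.norm_integral_le_of_norm_le_const
        (a := (0:ℝ)) (b := 1) (C := ε / 2)
        (f := fun u => f (ψ u) - p.eval (ψ u)) ?_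
      · simpa [Real.norm_eq_abs] using this
      · intro x hx
        rw [Set.uIoc_of_le zero_le_one] at hx
        have hxIcc : x ∈ Set.Icc (0:ℝ) 1 := ⟨hx.1.le, hx.2⟩
        have hmem := hrange ψ hb x hxIcc
        have := hp (ψ x) hmem
        rw [Real.norm_eq_abs, abs_sub_comm]
        linarith [abs_sub_comm (p.eval (ψ x)) (f (ψ x))]
    have h1 := hbound ψ₁ hc₁ hb₁
    have h2 := hbound ψ₂ hc₂ hb₂
    have hpeq := hpol p
    calc |(∫ u in (0:ℝ)..1, f (ψ₁ u)) - ∫ u in (0:ℝ)..1, f (ψ₂ u)|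
        = |((∫ u in (0:ℝ)..1, f (ψ₁ u)) - ∫ u in (0:ℝ)..1, p.eval (ψ₁ u))
            + ((∫ u in (0:ℝ)..1, p.eval (ψ₂ u)) - ∫ u in (0:ℝ)..1, f (ψ₂ u))| := by
          rw [hpeq]; ring_nf
      _ ≤ |(∫ u in (0:ℝ)..1, f (ψ₁ u)) - ∫ u in (0:ℝ)..1, p.eval (ψ₁ u)|
            + |(∫ u in (0:ℝ)..1, p.eval (ψ₂ u)) - ∫ u in (0:ℝ)..1, f (ψ₂ u)| :=
          abs_add_le _ _
      _ ≤ ε / 2 + ε / 2 := add_le_add h1 (by rw [abs_sub_comm]; exact h2)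
      _ = ε := by ring
  have : |(∫ u in (0:ℝ)..1, f (ψ₁ u)) - ∫ u in (0:ℝ)..1, f (ψ₂ u)| ≤ 0 := by
    by_contra hcon
    push_neg at hcon
    have := habs _ (half_pos hcon)
    have h2 : |(∫ u in (0:ℝ)..1, f (ψ₁ u)) - ∫ u in (0:ℝ)..1, f (ψ₂ u)| / 2
        < |(∫ u in (0:ℝ)..1, f (ψ₁ u)) - ∫ u in (0:ℝ)..1, f (ψ₂ u)| := half_lt_self hcon
    linarith
  have := abs_nonneg ((∫ u in (0:ℝ)..1, f (ψ₁ u)) - ∫ u in (0:ℝ)..1, f (ψ₂ u))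
  have heq : |(∫ u in (0:ℝ)..1, f (ψ₁ u)) - ∫ u in (0:ℝ)..1, f (ψ₂ u)| = 0 := le_antisymm ‹_› ‹_›
  have := abs_eq_zero.mp heq
  linarith [sub_eq_zero.mp this]

/-- The moments `∫₀¹ ψ(u)^k du`, `k ≥ 0`, of a strictly monotone continuous function
`ψ : [0,1] → ℝ` determine `ψ` up to the reflection `u ↦ 1 - u`. -/
theorem moments_determine_monotone_function (ψ₁ ψ₂ : ℝ → ℝ)
    (hc₁ : ContinuousOn ψ₁ (Set.Icc 0 1)) (hc₂ : ContinuousOn ψ₂ (Set.Icc 0 1))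
    (hm₁ : StrictMonoOn ψ₁ (Set.Icc 0 1) ∨ StrictAntiOn ψ₁ (Set.Icc 0 1))
    (hm₂ : StrictMonoOn ψ₂ (Set.Icc 0 1) ∨ StrictAntiOn ψ₂ (Set.Icc 0 1))
    (hmom : ∀ k : ℕ, ∫ u in (0:ℝ)..1, (ψ₁ u) ^ k = ∫ u in (0:ℝ)..1, (ψ₂ u) ^ k) :
    (∀ u ∈ Set.Icc (0:ℝ) 1, ψ₂ u = ψ₁ u) ∨
      (∀ u ∈ Set.Icc (0:ℝ) 1, ψ₂ u = ψ₁ (1 - u)) := by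
  have hf : ∀ f : ℝ → ℝ, Continuous f →
      ∫ u in (0:ℝ)..1, f (ψ₁ u) = ∫ u in (0:ℝ)..1, f (ψ₂ u) :=
    moments_aux_keyC ψ₁ ψ₂ hc₁ hc₂ hmom
  rcases hm₁ with hm₁ | hm₁ <;> rcases hm₂ with hm₂ | hm₂
  · left
    intro u hu
    exact (moments_aux_keyA ψ₁ ψ₂ hc₁ hc₂ hm₁ hm₂ hf u hu).symm
  · -- ψ₁ mono, ψ₂ anti
    right
    have hf' : ∀ f : ℝ → ℝ, Continuous f →
        ∫ u in (0:ℝ)..1, f (ψ₁ u) = ∫ u in (0:ℝ)..1, f (ψ₂ (1 - u)) := by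
      intro f hfc
      rw [moments_aux_refl_integral (fun u => f (ψ₂ u))]
      exact hf f hfc
    have hA := moments_aux_keyA ψ₁ (fun u => ψ₂ (1 - u)) hc₁
      (moments_aux_refl_cont hc₂) hm₁ (moments_aux_refl_mono hm₂) hf'
    intro u hu
    have := hA (1 - u) (moments_aux_refl_mem hu)
    simp only [sub_sub_cancel] at this
    exact this.symm
  · -- ψ₁ anti, ψ₂ mono
    right
    have hf' : ∀ f : ℝ → ℝ, Continuous f →
        ∫ u in (0:ℝ)..1, f (ψ₁ (1 - u)) = ∫ u in (0:ℝ)..1, f (ψ₂ u) := by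
      intro f hfc
      rw [moments_aux_refl_integral (fun u => f (ψ₁ u))]
      exact hf f hfc
    have hA := moments_aux_keyA (fun u => ψ₁ (1 - u)) ψ₂
      (moments_aux_refl_cont hc₁) hc₂ (moments_aux_refl_mono hm₁) hm₂ hf'
    intro u hu
    exact (hA u hu).symm
  · -- both anti
    left
    have hf' : ∀ f : ℝ → ℝ, Continuous f →
        ∫ u in (0:ℝ)..1, f (ψ₁ (1 - u)) = ∫ u in (0:ℝ)..1, f (ψ₂ (1 - u)) := by
      intro f hfc
      rw [moments_aux_refl_integral (fun u => f (ψ₁ u)),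
        moments_aux_refl_integral (fun u => f (ψ₂ u))]
      exact hf f hfc
    have hA := moments_aux_keyA (fun u => ψ₁ (1 - u)) (fun u => ψ₂ (1 - u))
      (moments_aux_refl_cont hc₁) (moments_aux_refl_cont hc₂)
      (moments_aux_refl_mono hm₁) (moments_aux_refl_mono hm₂) hf'
    intro u hu
    have := hA (1 - u) (moments_aux_refl_mem hu)
    simp only [sub_sub_cancel] at this
    exact this.symm
end
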